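/- Let E be a real vector space, A ⊆ E star-shaped, and let C ⊆ cone(Aᶜ) be a cone (λ • z ∈ C for every z ∈ C and λ ≥ 0) such that both A ∩ C and Aᶜ ∩ C are convex. Then the Minkowski gauge of A is additive on C: 𝒟_A(x + y) = 𝒟_A(x) + 𝒟_A(y) for all x, y ∈ C (in [0,∞]). -/

import Mathlib

open ENNReal

/-- The Minkowski gauge of a set `A` in a real vector space, with values in `[0,∞]`
(the infimum of the empty set being `∞`). -/
noncomputable def mgauge {E : Type*} [AddCommGroup E] [Module ℝ E] (A : Set E) (x : E) : ℝ≥0∞ :=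
  sInf {r : ℝ≥0∞ | ∃ m : ℝ, 0 < m ∧ m⁻¹ • x ∈ A ∧ r = ENNReal.ofReal m}

/-- The conic hull of a set `S`: `{λ • z : λ ≥ 0, z ∈ S} ∪ {0}`. -/
def conicHull {E : Type*} [AddCommGroup E] [Module ℝ E] (S : Set E) : Set E :=
  {y : E | ∃ l : ℝ, 0 ≤ l ∧ ∃ z ∈ S, y = l • z} ∪ {0}

/-! Because `A` is star-shaped, the scales `m > 0` with `m⁻¹ • x ∈ A` form an up-set of `(0, ∞)`,
so the gauge is both the infimum of these scales and the supremum of the complementary ones,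
with `m⁻¹ • x ∉ A`. Since `C` is a cone, `(a + b)⁻¹ • (x + y)` is a convex combination of
`a⁻¹ • x` and `b⁻¹ • y` inside `C`: convexity of `A ∩ C` gives subadditivity through the
infimum, and convexity of `Aᶜ ∩ C` superadditivity through the supremum. The supremum argument
needs complementary scales of `x` and `y` to exist, which `C ⊆ cone(Aᶜ)` provides for nonzero
vectors; the zero vector is handled directly. -/

section

variable {E : Type*} [AddCommGroup E] [Module ℝ E] {A C : Set E} {x y : E}

theorem mgauge_eq_biInf (A : Set E) (x : E) :
    mgauge A x = ⨅ (m : ℝ) (_ : 0 < m ∧ m⁻¹ • x ∈ A), ENNReal.ofReal m := by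
  have : {r : ℝ≥0∞ | ∃ m : ℝ, 0 < m ∧ m⁻¹ • x ∈ A ∧ r = ENNReal.ofReal m} =
      ENNReal.ofReal '' {m | 0 < m ∧ m⁻¹ • x ∈ A} := by
    ext r; simp [eq_comm, and_assoc]
  rw [mgauge, this, sInf_image]
  rfl

theorem mgauge_le_ofReal {m : ℝ} (hm : 0 < m) (hx : m⁻¹ • x ∈ A) :
    mgauge A x ≤ ENNReal.ofReal m :=
  sInf_le ⟨m, hm, hx, rfl⟩

theorem le_mgauge_iff {c : ℝ≥0∞} :
    c ≤ mgauge A x ↔ ∀ m : ℝ, 0 < m → m⁻¹ • x ∈ A → c ≤ ENNReal.ofReal m := by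
  simp [mgauge_eq_biInf]

@[simp]
theorem mgauge_empty (x : E) : mgauge ∅ x = ⊤ := by
  simp [mgauge_eq_biInf]

theorem mgauge_zero (h : (0 : E) ∈ A) : mgauge A 0 = 0 := by
  refine le_antisymm (le_of_forall_gt fun c hc => ?_) bot_le
  obtain ⟨r, -, hr, hrc⟩ := ENNReal.lt_iff_exists_real_btwn.1 hc
  exact (mgauge_le_ofReal (ENNReal.ofReal_pos.1 hr) (by rwa [smul_zero])).trans_lt hrc

theorem inv_smul_add_mem_of_convex_inter {K : Set E}
    (hC : ∀ z ∈ C, ∀ l : ℝ, 0 ≤ l → l • z ∈ C) (hK : Convex ℝ (K ∩ C)) (hx : x ∈ C) (hy : y ∈ C)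
    {a b : ℝ} (ha : 0 < a) (hb : 0 < b) (hax : a⁻¹ • x ∈ K) (hby : b⁻¹ • y ∈ K) :
    (a + b)⁻¹ • (x + y) ∈ K := by
  have hab : 0 < a + b := add_pos ha hb
  have hcombo : (a / (a + b)) • (a⁻¹ • x) + (b / (a + b)) • (b⁻¹ • y) = (a + b)⁻¹ • (x + y) := by
    match_scalars <;> field_simp
  rw [← hcombo]
  exact (hK ⟨hax, hC x hx _ (inv_nonneg.2 ha.le)⟩ ⟨hby, hC y hy _ (inv_nonneg.2 hb.le)⟩
    (by positivity) (by positivity) (by field_simp)).1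

theorem mgauge_add_le (hC : ∀ z ∈ C, ∀ l : ℝ, 0 ≤ l → l • z ∈ C) (hconv : Convex ℝ (A ∩ C))
    (hx : x ∈ C) (hy : y ∈ C) : mgauge A (x + y) ≤ mgauge A x + mgauge A y := by
  rw [mgauge_eq_biInf A x, mgauge_eq_biInf A y]
  refine ENNReal.le_iInf₂_add_iInf₂ fun a ha b hb => ?_
  rw [← ENNReal.ofReal_add ha.1.le hb.1.le]
  exact mgauge_le_ofReal (add_pos ha.1 hb.1)
    (inv_smul_add_mem_of_convex_inter hC hconv hx hy ha.1 hb.1 ha.2 hb.2)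

theorem StarConvex.le_of_inv_smul_mem (hA : StarConvex ℝ 0 A) {m a : ℝ} (hm : 0 < m)
    (hmx : m⁻¹ • x ∈ A) (hax : a⁻¹ • x ∉ A) : a ≤ m := by
  by_contra! hma
  refine hax ?_
  have : a⁻¹ • x = (m / a) • m⁻¹ • x := by
    rw [smul_smul]; congr 1; field_simp
  rw [this]
  exact hA.smul_mem hmx (div_nonneg hm.le (hm.trans hma).le) ((div_le_one (hm.trans hma)).2 hma.le)

theorem StarConvex.ofReal_le_mgauge (hA : StarConvex ℝ 0 A) {a : ℝ} (hax : a⁻¹ • x ∉ A) :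
    ENNReal.ofReal a ≤ mgauge A x :=
  le_mgauge_iff.2 fun _ hm hmx => ENNReal.ofReal_le_ofReal (hA.le_of_inv_smul_mem hm hmx hax)

theorem StarConvex.mgauge_eq_biSup (hA : StarConvex ℝ 0 A) (x : E) :
    mgauge A x = ⨆ (a : ℝ) (_ : 0 < a ∧ a⁻¹ • x ∉ A), ENNReal.ofReal a := by
  refine le_antisymm (le_of_forall_gt fun c hc => ?_) (iSup₂_le fun a ha => hA.ofReal_le_mgauge ha.2)
  obtain ⟨r, -, hsr, hrc⟩ := ENNReal.lt_iff_exists_real_btwn.1 hc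
  have hr : 0 < r := ENNReal.ofReal_pos.1 (zero_le.trans_lt hsr)
  have hrx : r⁻¹ • x ∈ A := by
    by_contra hrx
    exact (le_iSup₂ (f := fun a (_ : 0 < a ∧ a⁻¹ • x ∉ A) => ENNReal.ofReal a) r ⟨hr, hrx⟩).not_gt hsr
  exact (mgauge_le_ofReal hr hrx).trans_lt hrc

theorem exists_inv_smul_notMem_of_mem_conicHull_compl (hx : x ∈ conicHull Aᶜ) (hx0 : x ≠ 0) :
    ∃ a : ℝ, 0 < a ∧ a⁻¹ • x ∉ A := by
  obtain ⟨l, hl, z, hz, rfl⟩ | hx := hx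
  · have hl : 0 < l := hl.lt_of_ne (by rintro rfl; simp at hx0)
    exact ⟨l, hl, by rwa [inv_smul_smul₀ hl.ne']⟩
  · exact absurd hx hx0

theorem StarConvex.mgauge_add_le_mgauge_add (hA : StarConvex ℝ 0 A)
    (hC : ∀ z ∈ C, ∀ l : ℝ, 0 ≤ l → l • z ∈ C) (hconv : Convex ℝ (Aᶜ ∩ C))
    (hx : x ∈ C) (hy : y ∈ C) (hx' : ∃ a : ℝ, 0 < a ∧ a⁻¹ • x ∉ A)
    (hy' : ∃ b : ℝ, 0 < b ∧ b⁻¹ • y ∉ A) : mgauge A x + mgauge A y ≤ mgauge A (x + y) := by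
  rw [hA.mgauge_eq_biSup x, hA.mgauge_eq_biSup y]
  refine ENNReal.biSup_add_biSup_le' hx' hy' fun a ha b hb => ?_
  rw [← ENNReal.ofReal_add ha.1.le hb.1.le]
  exact hA.ofReal_le_mgauge (inv_smul_add_mem_of_convex_inter hC hconv hx hy ha.1 hb.1 ha.2 hb.2)

end

theorem stmt_13 {E : Type*} [AddCommGroup E] [Module ℝ E] (A C : Set E)
    (hstar : ∀ x ∈ A, ∀ l ∈ Set.Icc (0 : ℝ) 1, l • x ∈ A)
    (hC : ∀ z ∈ C, ∀ l : ℝ, 0 ≤ l → l • z ∈ C)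
    (hCsub : C ⊆ conicHull Aᶜ)
    (hconvA : Convex ℝ (A ∩ C)) (hconvAc : Convex ℝ (Aᶜ ∩ C))
    (x y : E) (hx : x ∈ C) (hy : y ∈ C) :
    mgauge A (x + y) = mgauge A x + mgauge A y := by
  have hA : StarConvex ℝ 0 A := starConvex_zero_iff.2 fun z hz l hl0 hl1 => hstar z hz l ⟨hl0, hl1⟩
  obtain rfl | hne := A.eq_empty_or_nonempty
  · simp
  have h0 : (0 : E) ∈ A := hA.mem hne
  obtain rfl | hx0 := eq_or_ne x 0
  · simp [mgauge_zero h0]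
  obtain rfl | hy0 := eq_or_ne y 0
  · simp [mgauge_zero h0]
  exact le_antisymm (mgauge_add_le hC hconvA hx hy) <| hA.mgauge_add_le_mgauge_add hC hconvAc hx hy
    (exists_inv_smul_notMem_of_mem_conicHull_compl (hCsub hx) hx0)
    (exists_inv_smul_notMem_of_mem_conicHull_compl (hCsub hy) hy0)
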